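/- arXiv:1611.05679 — 2 statements merged into one kernel-verified Lean document; each statement's English description precedes it below -/
import Mathlib

section
/- Let Q be a key polynomial and h_1, ..., h_s ∈ K[x] with deg(h_i) < deg(Q) for all i. Write the product Π h_i = qQ + r with deg(r) < deg(Q). Then ν(r) = ν(Π h_i) < ν(qQ). -/
open Polynomial
open scoped Classical
noncomputable section

/-- `ν` is (the restriction to nonzero polynomials of) a valuation on `K[x]`,
nontrivial on `K`, with `ν(x) ≥ 0`.  Values are taken in a linearly ordered
field `Γ` (playing the role of the divisible hull of the value group). -/
structure IsVal {K : Type*} [Field K] {Γ : Type*} [Field Γ] [LinearOrder Γ] [IsStrictOrderedRing Γ]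
    (ν : Polynomial K → Γ) : Prop where
  map_mul : ∀ f g : Polynomial K, f ≠ 0 → g ≠ 0 → ν (f * g) = ν f + ν g
  map_add : ∀ f g : Polynomial K, f ≠ 0 → g ≠ 0 → f + g ≠ 0 →
    min (ν f) (ν g) ≤ ν (f + g)
  nontrivial : ∃ a : K, a ≠ 0 ∧ ν (C a) ≠ 0
  nonneg_x : 0 ≤ ν X

/-- `ε(f) = max_{b ≥ 1, ∂_b f ≠ 0} (ν(f) - ν(∂_b f))/b`, where `∂_b` is the
`b`-th formal (Hasse) derivative.  (Terms with `∂_b f = 0` correspond to the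
value `-∞` and are omitted from the maximum.) -/
noncomputable def eps {K : Type*} [Field K] {Γ : Type*} [Field Γ] [LinearOrder Γ] [IsStrictOrderedRing Γ]
    (ν : Polynomial K → Γ) (f : Polynomial K) : Γ :=
  if h : ((Finset.Icc 1 f.natDegree).filter
      fun b => Polynomial.hasseDeriv b f ≠ 0).Nonempty then
    ((Finset.Icc 1 f.natDegree).filter
      fun b => Polynomial.hasseDeriv b f ≠ 0).sup' h
      fun b => (ν f - ν (Polynomial.hasseDeriv b f)) / (b : Γ)
  else 0

/-- A monic (nonconstant) polynomial `Q` is a key polynomial for `ν` if every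
`f ∈ K[x]` with `ε(f) ≥ ε(Q)` satisfies `deg f ≥ deg Q`. -/
def IsKeyPol {K : Type*} [Field K] {Γ : Type*} [Field Γ] [LinearOrder Γ] [IsStrictOrderedRing Γ]
    (ν : Polynomial K → Γ) (Q : Polynomial K) : Prop :=
  Q.Monic ∧ 1 ≤ Q.natDegree ∧
    ∀ f : Polynomial K, 1 ≤ f.natDegree → eps ν Q ≤ eps ν f →
      Q.natDegree ≤ f.natDegree

/-- The `i`-th coefficient `f_i` of the `q`-standard expansion
`f = Σ f_i q^i` (each `f_i = 0` or `deg f_i < deg q`), for `q` monic. -/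
noncomputable def qCoeff {K : Type*} [Field K] (q f : Polynomial K) (i : ℕ) :
    Polynomial K :=
  (f /ₘ q ^ i) %ₘ q

/-- The `q`-truncation `ν_q(f) = min_i ν(f_i q^i)` of `ν`, the minimum taken
over the nonzero coefficients of the `q`-standard expansion of `f`. -/
noncomputable def truncVal {K : Type*} [Field K] {Γ : Type*}
    [Field Γ] [LinearOrder Γ] [IsStrictOrderedRing Γ] (ν : Polynomial K → Γ) (q f : Polynomial K) : Γ :=
  if h : ((Finset.range (f.natDegree + 1)).filter
      fun i => qCoeff q f i ≠ 0).Nonempty then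
    ((Finset.range (f.natDegree + 1)).filter
      fun i => qCoeff q f i ≠ 0).inf' h
      fun i => ν (qCoeff q f i * q ^ i)
  else 0

/-- `I(Q) = {b : (ν(Q) - ν(∂_b Q))/b = ε(Q)}`. -/
def Iset {K : Type*} [Field K] {Γ : Type*} [Field Γ] [LinearOrder Γ] [IsStrictOrderedRing Γ]
    (ν : Polynomial K → Γ) (Q : Polynomial K) : Set ℕ :=
  {b | 1 ≤ b ∧ Polynomial.hasseDeriv b Q ≠ 0 ∧
    (ν Q - ν (Polynomial.hasseDeriv b Q)) / (b : Γ) = eps ν Q}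

/-- `S_Q(f) = {i : ν(f_i Q^i) = ν_Q(f)}` (over nonzero coefficients). -/
def Sset {K : Type*} [Field K] {Γ : Type*} [Field Γ] [LinearOrder Γ] [IsStrictOrderedRing Γ]
    (ν : Polynomial K → Γ) (q f : Polynomial K) : Set ℕ :=
  {i | qCoeff q f i ≠ 0 ∧ ν (qCoeff q f i * q ^ i) = truncVal ν q f}


variable {K : Type*} [Field K] {Γ : Type*} [Field Γ] [LinearOrder Γ] [IsStrictOrderedRing Γ]

/-!
Extend `ν` to a valuation `v` on `K[x]` with `v 0 = ⊤`, and call `f` good if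
`v f < v ((f div Q) Q)`; then the remainder `f mod Q` has the same value as `f`.
If `f = q Q + r` with `deg f < 2 deg Q` and `ε(f) < ε(Q)`, then `f` is good: otherwise, for `b`
attaining `ε(Q)`, the term `∂_b Q · q` strictly dominates all other terms of the Leibniz
expansion of `∂_b f = ∂_b r + ∂_b (Q q)`, and this forces `ε(f) ≥ ε(Q)`.
Polynomials of degree `< deg Q` have `ε < ε(Q)` and `ε(g h) ≤ max (ε g) (ε h)`, so by
induction on the number of factors: if `P` is good with remainder `r`, then `P h ≡ r h mod Q`
with `r h` good, whence `P h` is good.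
-/

namespace Polynomial

theorem mul_divByMonic_eq_divByMonic_mul_add {R : Type*} [CommRing R] {q : R[X]} (hq : q.Monic)
    (p h : R[X]) :
    (p * h) /ₘ q = p /ₘ q * h + (p %ₘ q * h) /ₘ q := by
  nontriviality R
  refine (div_modByMonic_unique _ _ hq ⟨?_, degree_modByMonic_lt (p %ₘ q * h) hq⟩).1
  linear_combination modByMonic_add_div (p %ₘ q * h) q + h * modByMonic_add_div p q

end Polynomial

namespace IsVal

variable {ν : K[X] → Γ}

theorem map_one (hν : IsVal ν) : ν 1 = 0 := by
  have := hν.map_mul 1 1 one_ne_zero one_ne_zero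
  rw [mul_one] at this
  linarith

variable (hν : IsVal ν)

def toAddValuation : AddValuation K[X] (WithTop Γ) :=
  AddValuation.of (fun f => if f = 0 then ⊤ else (ν f : WithTop Γ)) (if_pos rfl)
    (by simp [hν.map_one])
    (fun f g => by
      by_cases hf : f = 0
      · simp [hf]
      by_cases hg : g = 0
      · simp [hg]
      by_cases hfg : f + g = 0
      · simp [hfg]
      simp only [hf, hg, hfg, if_false, ← WithTop.coe_min, WithTop.coe_le_coe]
      exact hν.map_add f g hf hg hfg)
    (fun f g => by
      by_cases hf : f = 0
      · simp [hf]
      by_cases hg : g = 0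
      · simp [hg]
      simp [hf, hg, hν.map_mul f g hf hg, WithTop.coe_add])

theorem toAddValuation_apply {f : K[X]} (hf : f ≠ 0) : hν.toAddValuation f = ν f := by
  simp [toAddValuation, hf]

theorem coe_lt_toAddValuation_iff {c : Γ} {f : K[X]} :
    (c : WithTop Γ) < hν.toAddValuation f ↔ (f ≠ 0 → c < ν f) := by
  by_cases hf : f = 0
  · simp [hf]
  · simp [hf, hν.toAddValuation_apply hf]

theorem coe_le_toAddValuation_iff {c : Γ} {f : K[X]} :
    (c : WithTop Γ) ≤ hν.toAddValuation f ↔ (f ≠ 0 → c ≤ ν f) := by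
  by_cases hf : f = 0
  · simp [hf]
  · simp [hf, hν.toAddValuation_apply hf]

theorem modByMonic_ne_zero_and_val_eq {f Q : K[X]} (hf : f ≠ 0)
    (hfQ : hν.toAddValuation f < hν.toAddValuation (f /ₘ Q * Q)) :
    f %ₘ Q ≠ 0 ∧ ν (f %ₘ Q) = ν f := by
  have hr : hν.toAddValuation (f %ₘ Q) = ν f := by
    rw [modByMonic_eq_sub_mul_div, mul_comm Q, AddValuation.map_sub_eq_of_lt_left _ hfQ,
      hν.toAddValuation_apply hf]
  have hr0 : f %ₘ Q ≠ 0 := by rintro h0; simp [h0] at hr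
  rw [hν.toAddValuation_apply hr0, WithTop.coe_inj] at hr
  exact ⟨hr0, hr⟩

end IsVal

section Eps

variable {ν : K[X] → Γ}

theorem le_eps {f : K[X]} {b : ℕ} (hb : 1 ≤ b) (hbf : hasseDeriv b f ≠ 0) :
    (ν f - ν (hasseDeriv b f)) / b ≤ eps ν f := by
  have hmem : b ∈ (Finset.Icc 1 f.natDegree).filter fun b => hasseDeriv b f ≠ 0 :=
    Finset.mem_filter.2 ⟨Finset.mem_Icc.2 ⟨hb, le_of_not_gt fun hlt =>
      hbf (hasseDeriv_eq_zero_of_lt_natDegree f b hlt)⟩, hbf⟩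
  rw [eps, dif_pos ⟨b, hmem⟩]
  exact Finset.le_sup' (fun b => (ν f - ν (hasseDeriv b f)) / (b : Γ)) hmem

theorem sub_mul_eps_le_val_hasseDeriv {f : K[X]} {b : ℕ} (hbf : hasseDeriv b f ≠ 0) :
    ν f - b * eps ν f ≤ ν (hasseDeriv b f) := by
  rcases Nat.eq_zero_or_pos b with rfl | hb
  · simp
  have := le_eps (ν := ν) hb hbf
  rw [div_le_iff₀ (by exact_mod_cast hb)] at this
  linarith

theorem exists_val_hasseDeriv_eq_sub_mul_eps {f : K[X]} (hf : 1 ≤ f.natDegree) :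
    ∃ b, 1 ≤ b ∧ hasseDeriv b f ≠ 0 ∧ ν (hasseDeriv b f) = ν f - b * eps ν f := by
  have hne : ((Finset.Icc 1 f.natDegree).filter fun b => hasseDeriv b f ≠ 0).Nonempty := by
    refine ⟨f.natDegree, Finset.mem_filter.2 ⟨Finset.mem_Icc.2 ⟨hf, le_rfl⟩, ?_⟩⟩
    rw [hasseDeriv_natDegree_eq_C, Ne, C_eq_zero, leadingCoeff_eq_zero]
    rintro rfl
    simp at hf
  obtain ⟨b, hbS, hb⟩ :=
    Finset.exists_mem_eq_sup' hne fun b => (ν f - ν (hasseDeriv b f)) / (b : Γ)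
  obtain ⟨hbI, hbf⟩ := Finset.mem_filter.1 hbS
  have hb1 := (Finset.mem_Icc.1 hbI).1
  refine ⟨b, hb1, hbf, ?_⟩
  rw [eps, dif_pos hne, hb, div_eq_iff (by positivity)] at *
  linarith

/-- `ε(f) < e`, where `ε` of a constant is read as `-∞`
(the junk value of `eps` there is `0`). -/
def EpsLt (ν : K[X] → Γ) (f : K[X]) (e : Γ) : Prop :=
  ∀ b, 1 ≤ b → hasseDeriv b f ≠ 0 → ν f - b * e < ν (hasseDeriv b f)

theorem epsLt_of_eps_lt {f : K[X]} {e : Γ} (h : eps ν f < e) : EpsLt ν f e := by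
  intro b hb hbf
  have hbpos : (0 : Γ) < b := by exact_mod_cast hb
  have := sub_mul_eps_le_val_hasseDeriv (ν := ν) hbf
  nlinarith

theorem IsKeyPol.epsLt {Q p : K[X]} (hQ : IsKeyPol ν Q) (hp : p.natDegree < Q.natDegree) :
    EpsLt ν p (eps ν Q) := by
  intro b hb hbp
  have hbdeg : b ≤ p.natDegree :=
    le_of_not_gt fun hlt => hbp (hasseDeriv_eq_zero_of_lt_natDegree p b hlt)
  refine epsLt_of_eps_lt (lt_of_not_ge fun hle => ?_) b hb hbp
  exact absurd (hQ.2.2 p (hb.trans hbdeg) hle) (not_le.2 hp)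

theorem EpsLt.sub_mul_le_val_hasseDeriv {f : K[X]} {e : Γ} (h : EpsLt ν f e) {b : ℕ}
    (hbf : hasseDeriv b f ≠ 0) : ν f - b * e ≤ ν (hasseDeriv b f) := by
  rcases Nat.eq_zero_or_pos b with rfl | hb
  · simp
  · exact (h b hb hbf).le

theorem EpsLt.mul (hν : IsVal ν) {f g : K[X]} {e : Γ} (hf : f ≠ 0) (hg : g ≠ 0)
    (hfe : EpsLt ν f e) (hge : EpsLt ν g e) : EpsLt ν (f * g) e := by
  intro b hb hbfg
  rw [hν.map_mul f g hf hg]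
  refine hν.coe_lt_toAddValuation_iff.1 ?_ hbfg
  rw [hasseDeriv_mul]
  refine AddValuation.map_lt_sum _ WithTop.coe_ne_top fun ij hij => ?_
  rw [hν.coe_lt_toAddValuation_iff]
  intro hij0
  rw [hν.map_mul _ _ (left_ne_zero_of_mul hij0) (right_ne_zero_of_mul hij0)]
  have hsum : (ij.1 : Γ) + ij.2 = b := by
    exact_mod_cast Finset.HasAntidiagonal.mem_antidiagonal.1 hij
  have hf' := hfe.sub_mul_le_val_hasseDeriv (left_ne_zero_of_mul hij0)
  have hg' := hge.sub_mul_le_val_hasseDeriv (right_ne_zero_of_mul hij0)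
  rcases Nat.eq_zero_or_pos ij.1 with hi | hi
  · have hj : 1 ≤ ij.2 := by have := Finset.HasAntidiagonal.mem_antidiagonal.1 hij; omega
    have := hge ij.2 hj (right_ne_zero_of_mul hij0)
    linear_combination this + hf' + e * hsum
  · have := hfe ij.1 hi (left_ne_zero_of_mul hij0)
    linear_combination this + hg' + e * hsum

end Eps

section KeyPol

variable {ν : K[X] → Γ}

theorem EpsLt.lt_val_hasseDeriv_mul_sub (hν : IsVal ν) {g q : K[X]} (hqe : EpsLt ν q (eps ν g))
    (n : ℕ) : ((ν g + ν q - (n + 1) * eps ν g : Γ) : WithTop Γ) <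
      hν.toAddValuation (hasseDeriv (n + 1) (g * q) - hasseDeriv (n + 1) g * q) := by
  rw [hasseDeriv_mul, Finset.Nat.sum_antidiagonal_succ', hasseDeriv_zero', add_sub_cancel_left]
  refine AddValuation.map_lt_sum _ WithTop.coe_ne_top fun ij hij => ?_
  rw [hν.coe_lt_toAddValuation_iff]
  intro hij0
  rw [hν.map_mul _ _ (left_ne_zero_of_mul hij0) (right_ne_zero_of_mul hij0)]
  have hsum : (ij.1 : Γ) + ij.2 = n := by
    exact_mod_cast Finset.HasAntidiagonal.mem_antidiagonal.1 hij
  have hg' := sub_mul_eps_le_val_hasseDeriv (ν := ν) (left_ne_zero_of_mul hij0)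
  have hq' := hqe (ij.2 + 1) (Nat.le_add_left 1 ij.2) (right_ne_zero_of_mul hij0)
  push_cast at hq'
  linear_combination hg' + hq' + eps ν g * hsum

theorem IsKeyPol.val_lt_val_divByMonic_mul (hν : IsVal ν) {Q f : K[X]} (hQ : IsKeyPol ν Q)
    (hf : f ≠ 0) (hdeg : f.natDegree < 2 * Q.natDegree) (hfe : EpsLt ν f (eps ν Q)) :
    hν.toAddValuation f < hν.toAddValuation (f /ₘ Q * Q) := by
  set v := hν.toAddValuation
  have hQ0 : Q ≠ 0 := hQ.1.ne_zero
  have hdiv : f %ₘ Q + Q * (f /ₘ Q) = f := modByMonic_add_div f Q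
  have hrdeg : (f %ₘ Q).degree < Q.degree := degree_modByMonic_lt f hQ.1
  have hqdeg : (f /ₘ Q).natDegree < Q.natDegree := by
    rw [natDegree_divByMonic f hQ.1]
    omega
  generalize f /ₘ Q = q at *
  generalize f %ₘ Q = r at *
  by_cases hq : q = 0
  · rw [hq, zero_mul, AddValuation.map_zero, hν.toAddValuation_apply hf]
    exact WithTop.coe_lt_top _
  by_contra! hle
  have hqr : v (q * Q) ≤ v r := by
    rw [eq_sub_of_add_eq hdiv, mul_comm Q]
    exact AddValuation.map_le_sub _ hle le_rfl
  rw [hν.toAddValuation_apply (mul_ne_zero hq hQ0), hν.map_mul q Q hq hQ0,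
    hν.coe_le_toAddValuation_iff] at hle hqr
  obtain ⟨b, hb, hbQ, hνbQ⟩ := exists_val_hasseDeriv_eq_sub_mul_eps (ν := ν) hQ.2.1
  obtain ⟨n, rfl⟩ : ∃ n, b = n + 1 := Nat.exists_eq_add_of_le' hb
  push_cast at hνbQ
  set m := ν Q + ν q - (n + 1) * eps ν Q
  have hmain : v (hasseDeriv (n + 1) Q * q) = m := by
    rw [hν.toAddValuation_apply (mul_ne_zero hbQ hq), hν.map_mul _ _ hbQ hq, hνbQ,
      WithTop.coe_inj]
    ring
  have hr : (m : WithTop Γ) < v (hasseDeriv (n + 1) r) := by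
    refine hν.coe_lt_toAddValuation_iff.2 fun hbr => ?_
    have hr0 : r ≠ 0 := by rintro rfl; simp at hbr
    have := hQ.epsLt (natDegree_lt_natDegree hr0 hrdeg) (n + 1) hb hbr
    push_cast at this
    linarith [hqr hr0]
  have hcross := (hQ.epsLt hqdeg).lt_val_hasseDeriv_mul_sub hν n
  have hdf : v (hasseDeriv (n + 1) f) = m := by
    rw [← hdiv, map_add,
      show ∀ a c d : K[X], a + c = d + (a + (c - d)) from fun _ _ _ => by ring, ← hmain]
    exact AddValuation.map_add_eq_of_lt_left _ (hmain ▸ AddValuation.map_lt_add _ hr hcross)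
  have hdf0 : hasseDeriv (n + 1) f ≠ 0 := by rintro h; simp [h] at hdf
  have hfb := hfe (n + 1) hb hdf0
  rw [hν.toAddValuation_apply hdf0, WithTop.coe_inj] at hdf
  push_cast at hfb
  linarith [hle hf]

theorem IsKeyPol.val_lt_val_mul_divByMonic_mul (hν : IsVal ν) {Q f h : K[X]}
    (hQ : IsKeyPol ν Q) (hf : f ≠ 0)
    (hfQ : hν.toAddValuation f < hν.toAddValuation (f /ₘ Q * Q)) (hh : h ≠ 0)
    (hhdeg : h.natDegree < Q.natDegree) :
    hν.toAddValuation (f * h) < hν.toAddValuation (f * h /ₘ Q * Q) := by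
  set v := hν.toAddValuation
  obtain ⟨hr0, hνr⟩ := hν.modByMonic_ne_zero_and_val_eq hf hfQ
  have hrdeg : (f %ₘ Q).natDegree < Q.natDegree :=
    natDegree_lt_natDegree hr0 (degree_modByMonic_lt f hQ.1)
  have hrh := hQ.val_lt_val_divByMonic_mul hν (mul_ne_zero hr0 hh)
    (by rw [natDegree_mul hr0 hh]; omega) ((hQ.epsLt hrdeg).mul hν hr0 hh (hQ.epsLt hhdeg))
  have hvh : v h ≠ ⊤ := by rw [hν.toAddValuation_apply hh]; exact WithTop.coe_ne_top
  rw [AddValuation.map_mul, hν.toAddValuation_apply hr0, hνr, ← hν.toAddValuation_apply hf,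
    ← AddValuation.map_mul] at hrh
  rw [mul_divByMonic_eq_divByMonic_mul_add hQ.1, add_mul, mul_right_comm]
  refine AddValuation.map_lt_add _ ?_ hrh
  rw [AddValuation.map_mul, AddValuation.map_mul]
  exact WithTop.add_lt_add_right hvh hfQ

theorem IsKeyPol.val_lt_val_prod_divByMonic_mul (hν : IsVal ν) {Q : K[X]} (hQ : IsKeyPol ν Q)
    {ι : Type*} (s : Finset ι) {h : ι → K[X]} (hne : ∀ i ∈ s, h i ≠ 0)
    (hdeg : ∀ i ∈ s, (h i).natDegree < Q.natDegree) :
    hν.toAddValuation (∏ i ∈ s, h i) < hν.toAddValuation ((∏ i ∈ s, h i) /ₘ Q * Q) := by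
  induction s using Finset.induction_on with
  | empty =>
    have hdeg1 : (1 : K[X]).degree < Q.degree := by
      rw [degree_one]
      exact natDegree_pos_iff_degree_pos.1 hQ.2.1
    rw [Finset.prod_empty, (divByMonic_eq_zero_iff hQ.1).2 hdeg1, zero_mul,
      AddValuation.map_one, AddValuation.map_zero]
    exact WithTop.coe_lt_top 0
  | insert a s ha ih =>
    rw [Finset.prod_insert ha, mul_comm]
    refine hQ.val_lt_val_mul_divByMonic_mul hν
      (Finset.prod_ne_zero_iff.2 fun i hi => hne i (Finset.mem_insert_of_mem hi))
      (ih (fun i hi => hne i (Finset.mem_insert_of_mem hi))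
        fun i hi => hdeg i (Finset.mem_insert_of_mem hi))
      (hne a (Finset.mem_insert_self a s)) (hdeg a (Finset.mem_insert_self a s))

end KeyPol

theorem prod_modByMonic_val_general (ν : Polynomial K → Γ) (hν : IsVal ν)
    (Q : Polynomial K) (hQ : IsKeyPol ν Q) (s : ℕ)
    (h : Fin s → Polynomial K) (hne : ∀ i, h i ≠ 0)
    (hdeg : ∀ i, (h i).natDegree < Q.natDegree) :
    (∏ i, h i) %ₘ Q ≠ 0 ∧
      ν ((∏ i, h i) %ₘ Q) = ν (∏ i, h i) ∧
      ((∏ i, h i) /ₘ Q ≠ 0 → ν (∏ i, h i) < ν ((∏ i, h i) /ₘ Q * Q)) := by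
  have hP : ∏ i, h i ≠ 0 := Finset.prod_ne_zero_iff.2 fun i _ => hne i
  have key := hQ.val_lt_val_prod_divByMonic_mul hν Finset.univ (fun i _ => hne i)
    fun i _ => hdeg i
  obtain ⟨hr0, hνr⟩ := hν.modByMonic_ne_zero_and_val_eq hP key
  refine ⟨hr0, hνr, fun hq => ?_⟩
  rw [hν.toAddValuation_apply hP] at key
  exact hν.coe_lt_toAddValuation_iff.1 key (mul_ne_zero hq hQ.1.ne_zero)

/-- If `h_1, …, h_s` all have degree `< deg Q` for a key polynomial `Q`, and
`Π h_i = q Q + r` is the Euclidean division by `Q`, then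
`ν(r) = ν(Π h_i) < ν(q Q)`. -/
theorem prod_modByMonic_val (ν : Polynomial K → Γ) (hν : IsVal ν)
    (Q : Polynomial K) (hQ : IsKeyPol ν Q) (s : ℕ) (hs : 1 ≤ s)
    (h : Fin s → Polynomial K) (hne : ∀ i, h i ≠ 0)
    (hdeg : ∀ i, (h i).natDegree < Q.natDegree) :
    (∏ i, h i) %ₘ Q ≠ 0 ∧
      ν ((∏ i, h i) %ₘ Q) = ν (∏ i, h i) ∧
      ((∏ i, h i) /ₘ Q ≠ 0 → ν (∏ i, h i) < ν ((∏ i, h i) /ₘ Q * Q)) :=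
  prod_modByMonic_val_general ν hν Q hQ s h hne hdeg
end
end

section
/- If Q and Q' are key polynomials for ν with ε(Q) < ε(Q'), then ν_Q(Q') < ν(Q'). -/
/-!
Suppose `ν_Q(Q') ≥ ν(Q')`. Call `g` `c`-bounded if `ν(∂_b g) ≥ ν(g) - b c` for all `b`; for
`deg g ≥ 1` this says `ε(g) ≤ c`. By the Leibniz rule for Hasse derivatives, `c`-boundedness is
preserved by products, and it passes to a sum whose value is at most that of each summand. Every
term `f_i Q^i` of the `Q`-expansion of `Q'` is `ε(Q)`-bounded (`f_i` because `deg f_i < deg Q`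
and `Q` is key), and each has value `≥ ν_Q(Q') ≥ ν(Q')`, so `Q'` is `ε(Q)`-bounded, i.e.
`ε(Q') ≤ ε(Q)`.
-/

open Polynomial
open scoped Classical
noncomputable section

variable {K : Type*} [Field K] {Γ : Type*} [Field Γ] [LinearOrder Γ] [IsStrictOrderedRing Γ]

theorem IsVal.le_map_sum {ν : K[X] → Γ} (hν : IsVal ν) {ι : Type*} {s : Finset ι}
    {g : ι → K[X]} {c : Γ}
    (hg : ∀ i ∈ s, g i ≠ 0 → c ≤ ν (g i)) (hsum : ∑ i ∈ s, g i ≠ 0) :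
    c ≤ ν (∑ i ∈ s, g i) := by
  induction s using Finset.induction_on with
  | empty => simp at hsum
  | insert a t ha ih =>
    rw [Finset.sum_insert ha] at hsum ⊢
    have hgt : ∀ i ∈ t, g i ≠ 0 → c ≤ ν (g i) := fun i hi => hg i (Finset.mem_insert_of_mem hi)
    by_cases hga : g a = 0
    · simp only [hga, zero_add] at hsum ⊢
      exact ih hgt hsum
    by_cases ht : ∑ i ∈ t, g i = 0
    · simp only [ht, add_zero] at hsum ⊢
      exact hg a (Finset.mem_insert_self a t) hga
    exact (le_min (hg a (Finset.mem_insert_self a t) hga) (ih hgt ht)).trans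
      (hν.map_add _ _ hga ht hsum)

section Expansion

theorem Polynomial.divByMonic_divByMonic {R : Type*} [CommRing R] [Nontrivial R] {p q r : R[X]}
    (hq : q.Monic) (hr : r.Monic) :
    p /ₘ q /ₘ r = p /ₘ (q * r) := by
  refine ((div_modByMonic_unique (p /ₘ q /ₘ r) (p %ₘ q + q * (p /ₘ q %ₘ r))
    (hq.mul hr) ⟨?_, ?_⟩).1).symm
  · linear_combination modByMonic_add_div p q + q * modByMonic_add_div (p /ₘ q) r
  · rw [hr.degree_mul]
    refine (degree_add_le _ _).trans_lt (max_lt ?_ ?_)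
    · exact (degree_modByMonic_lt p hq).trans_le
        (le_add_of_nonneg_right (zero_le_degree_iff.mpr hr.ne_zero))
    · by_cases h : p /ₘ q %ₘ r = 0
      · simp [h, bot_lt_iff_ne_bot, hq.ne_zero, hr.ne_zero]
      rw [mul_comm, hq.degree_mul, add_comm, degree_eq_natDegree hq.ne_zero]
      exact WithBot.add_lt_add_left (by simp) (degree_modByMonic_lt _ hr)

variable {q : K[X]}

theorem sum_qCoeff_mul_pow_add (hq : q.Monic) (f : K[X]) (N : ℕ) :
    ∑ i ∈ Finset.range N, qCoeff q f i * q ^ i + q ^ N * (f /ₘ q ^ N) = f := by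
  induction N with
  | zero => simp
  | succ N ih =>
    rw [Finset.sum_range_succ, pow_succ, ← divByMonic_divByMonic (hq.pow N) hq, qCoeff]
    linear_combination ih + q ^ N * modByMonic_add_div (f /ₘ q ^ N) q

theorem sum_qCoeff_mul_pow (hq : q.Monic) (hdq : 1 ≤ q.natDegree) (f : K[X]) :
    ∑ i ∈ Finset.range (f.natDegree + 1), qCoeff q f i * q ^ i = f := by
  have hdiv : f /ₘ q ^ (f.natDegree + 1) = 0 := by
    rw [divByMonic_eq_zero_iff (hq.pow _), degree_eq_natDegree (hq.pow _).ne_zero,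
      hq.natDegree_pow]
    exact degree_le_natDegree.trans_lt (by norm_cast; nlinarith)
  simpa [hdiv] using sum_qCoeff_mul_pow_add hq f (f.natDegree + 1)

theorem truncVal_le (ν : K[X] → Γ) {f : K[X]} {i : ℕ} (hi : i ∈ Finset.range (f.natDegree + 1))
    (hfi : qCoeff q f i ≠ 0) : truncVal ν q f ≤ ν (qCoeff q f i * q ^ i) := by
  have hmem : i ∈ (Finset.range (f.natDegree + 1)).filter (qCoeff q f · ≠ 0) :=
    Finset.mem_filter.mpr ⟨hi, hfi⟩
  rw [truncVal, dif_pos ⟨i, hmem⟩]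
  exact Finset.inf'_le _ hmem

end Expansion

/-- For `1 ≤ deg f` this is equivalent to `eps ν f ≤ c`, but unlike `eps` it is stable under
products and under sums without cancellation of values. -/
def EpsBounded (ν : K[X] → Γ) (c : Γ) (f : K[X]) : Prop :=
  ∀ b : ℕ, hasseDeriv b f ≠ 0 → ν f - b * c ≤ ν (hasseDeriv b f)

namespace EpsBounded

variable {ν : K[X] → Γ} {c : Γ} {f g : K[X]}

theorem of_natDegree_eq_zero (hf : f.natDegree = 0) : EpsBounded ν c f := by
  intro b hb
  obtain rfl | hb0 := b.eq_zero_or_pos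
  · simp
  · exact absurd (hasseDeriv_eq_zero_of_lt_natDegree f b (hf ▸ hb0)) hb

theorem mono {c' : Γ} (hf : EpsBounded ν c f) (hcc' : c ≤ c') : EpsBounded ν c' f := by
  intro b hb
  have : (b : Γ) * c ≤ b * c' := mul_le_mul_of_nonneg_left hcc' b.cast_nonneg
  linarith [hf b hb]

theorem mul (hν : IsVal ν) (hf : EpsBounded ν c f) (hg : EpsBounded ν c g) :
    EpsBounded ν c (f * g) := by
  intro b hb
  rw [hasseDeriv_mul] at hb ⊢
  refine hν.le_map_sum (fun jk hjk hne => ?_) hb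
  have hj : hasseDeriv jk.1 f ≠ 0 := left_ne_zero_of_mul hne
  have hk : hasseDeriv jk.2 g ≠ 0 := right_ne_zero_of_mul hne
  have hf0 : f ≠ 0 := fun h => hj (by simp [h])
  have hg0 : g ≠ 0 := fun h => hk (by simp [h])
  have hb : (jk.1 : Γ) + jk.2 = b := by
    exact_mod_cast Finset.HasAntidiagonal.mem_antidiagonal.mp hjk
  rw [hν.map_mul _ _ hf0 hg0, hν.map_mul _ _ hj hk, ← hb]
  linarith [hf _ hj, hg _ hk]

theorem pow (hν : IsVal ν) (hf : EpsBounded ν c f) (n : ℕ) : EpsBounded ν c (f ^ n) := by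
  induction n with
  | zero => exact of_natDegree_eq_zero (by simp)
  | succ n ih => exact pow_succ f n ▸ ih.mul hν hf

theorem sum (hν : IsVal ν) {ι : Type*} {s : Finset ι} {g : ι → K[X]}
    (hg : ∀ i ∈ s, EpsBounded ν c (g i)) (hmin : ∀ i ∈ s, g i ≠ 0 → ν (∑ i ∈ s, g i) ≤ ν (g i)) :
    EpsBounded ν c (∑ i ∈ s, g i) := by
  intro b hb
  rw [map_sum] at hb ⊢
  refine hν.le_map_sum (fun i hi hne => ?_) hb
  have hgi : g i ≠ 0 := fun h => hne (by simp [h])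
  linarith [hmin i hi hgi, hg i hi b hne]

end EpsBounded

theorem epsBounded_eps (ν : K[X] → Γ) (f : K[X]) : EpsBounded ν (eps ν f) f := by
  intro b hb
  obtain rfl | hb0 := b.eq_zero_or_pos
  · simp
  have hmem : b ∈ (Finset.Icc 1 f.natDegree).filter (hasseDeriv · f ≠ 0) :=
    Finset.mem_filter.mpr ⟨Finset.mem_Icc.mpr
      ⟨hb0, le_of_not_gt fun h => hb (hasseDeriv_eq_zero_of_lt_natDegree f b h)⟩, hb⟩
  have hle := (div_le_iff₀ (by exact_mod_cast hb0)).mp (Finset.le_sup'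
    (fun b => (ν f - ν (hasseDeriv b f)) / (b : Γ)) hmem)
  rw [eps, dif_pos ⟨b, hmem⟩]
  linarith

theorem eps_le_of_epsBounded {ν : K[X] → Γ} {c : Γ} {f : K[X]} (hf : 1 ≤ f.natDegree)
    (h : EpsBounded ν c f) : eps ν f ≤ c := by
  have htop : f.natDegree ∈ (Finset.Icc 1 f.natDegree).filter (hasseDeriv · f ≠ 0) := by
    simp [hf, hasseDeriv_natDegree_eq_C, ne_zero_of_natDegree_gt hf]
  rw [eps, dif_pos ⟨_, htop⟩]
  refine Finset.sup'_le _ _ fun b hb => ?_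
  obtain ⟨hb1, hb⟩ := Finset.mem_filter.mp hb
  rw [div_le_iff₀ (by exact_mod_cast (Finset.mem_Icc.mp hb1).1)]
  linarith [h b hb]

namespace IsKeyPol

variable {ν : K[X] → Γ} {Q : K[X]} (hQ : IsKeyPol ν Q)
include hQ

theorem epsBounded_of_natDegree_lt {g : K[X]} (hg : g.natDegree < Q.natDegree) :
    EpsBounded ν (eps ν Q) g := by
  rcases Nat.eq_zero_or_pos g.natDegree with hg0 | hg0
  · exact .of_natDegree_eq_zero hg0
  have hlt : eps ν g < eps ν Q := lt_of_not_ge fun h => (hQ.2.2 g hg0 h).not_gt hg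
  exact (epsBounded_eps ν g).mono hlt.le

theorem epsBounded_qCoeff_mul_pow (hν : IsVal ν) (f : K[X]) (i : ℕ) :
    EpsBounded ν (eps ν Q) (qCoeff Q f i * Q ^ i) := by
  have hQ1 : Q ≠ 1 := fun h => by simpa [h] using hQ.2.1
  exact (hQ.epsBounded_of_natDegree_lt (natDegree_modByMonic_lt _ hQ.1 hQ1)).mul hν
    ((epsBounded_eps ν Q).pow hν i)

end IsKeyPol

/-- If `Q, Q'` are key polynomials with `ε(Q) < ε(Q')`, then `ν_Q(Q') < ν(Q')`. -/
theorem trunc_lt_of_eps_lt (ν : Polynomial K → Γ) (hν : IsVal ν)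
    (Q Q' : Polynomial K) (hQ : IsKeyPol ν Q) (hQ' : IsKeyPol ν Q')
    (heps : eps ν Q < eps ν Q') :
    truncVal ν Q Q' < ν Q' := by
  by_contra! hle
  have hexp := sum_qCoeff_mul_pow hQ.1 hQ.2.1 Q'
  have hbdd : EpsBounded ν (eps ν Q) Q' := by
    rw [← hexp]
    refine .sum hν (fun i _ => hQ.epsBounded_qCoeff_mul_pow hν Q' i) fun i hi hne => ?_
    rw [hexp]
    exact hle.trans (truncVal_le ν hi (left_ne_zero_of_mul hne))
  exact (eps_le_of_epsBounded hQ'.2.1 hbdd).not_gt heps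
end
end
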